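/- The derivability of the judgment Γ ⊢_ps is decidable, and when derivable it has a unique derivation. Moreover, in any derivation, for judgments Γ ⊢_ps x : A and Γ ⊢_ps y : B with dim(A) = dim(B), necessarily x = y. -/
import Mathlib


namespace PsTT

/-- Types of the underlying globular type theory: terms are variables (natural numbers). -/
inductive Ty : Type
  | obj : Ty
  | hom : Ty → ℕ → ℕ → Ty
deriving DecidableEq

/-- Contexts (most recently declared variable first). -/
abbrev Ctx := List (ℕ × Ty)

/-- The set of variables declared in a context. -/
def Ctx.domvars (Γ : Ctx) : Set ℕ := {x | ∃ A, (x, A) ∈ Γ}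

/-- The dimension of a type (shifted so that `dimN obj = 0`). -/
def Ty.dimN : Ty → ℕ
  | .obj => 0
  | .hom A _ _ => A.dimN + 1

/-- Derivations of the judgment `Γ ⊢ps x : A` (as data, so that uniqueness of
derivations can be expressed). -/
inductive PsVar : Ctx → ℕ → Ty → Type
  | pss (x : ℕ) : PsVar [(x, .obj)] x .obj
  | pse {Γ : Ctx} {x : ℕ} {A : Ty} (y f : ℕ) :
      PsVar Γ x A → y ∉ Ctx.domvars Γ → f ∉ Ctx.domvars Γ → y ≠ f →
      PsVar ((f, .hom A x y) :: (y, A) :: Γ) f (.hom A x y)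
  | psd {Γ : Ctx} {f : ℕ} {A : Ty} {x y : ℕ} :
      PsVar Γ f (.hom A x y) → PsVar Γ y A

/-- Derivations of the judgment `Γ ⊢ps`. -/
inductive PsCtx : Ctx → Type
  | ps {Γ : Ctx} {x : ℕ} : PsVar Γ x .obj → PsCtx Γ

end PsTT

namespace PsTT

/-- The chain of iterated targets of a variable-type pair. -/
def pairs : ℕ × Ty → List (ℕ × Ty)
  | (x, .obj) => [(x, .obj)]
  | (f, .hom A u v) => (f, .hom A u v) :: pairs (v, A)

theorem pairs_self (p : ℕ × Ty) : p ∈ pairs p := by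
  obtain ⟨x, A⟩ := p
  cases A <;> simp [pairs]

theorem pairs_dim_le : ∀ (p q : ℕ × Ty), q ∈ pairs p → q.2.dimN ≤ p.2.dimN
  | (x, .obj), q, h => by
      simp [pairs] at h; subst h; simp
  | (f, .hom A u v), q, h => by
      simp only [pairs, List.mem_cons] at h
      rcases h with h | h
      · subst h; simp
      · have h2 : q.2.dimN ≤ A.dimN := pairs_dim_le (v, A) q h
        show q.2.dimN ≤ A.dimN + 1
        omega

theorem pairs_unique : ∀ (p q q' : ℕ × Ty), q ∈ pairs p → q' ∈ pairs p →
    q.2.dimN = q'.2.dimN → q = q'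
  | (x, .obj), q, q', h, h', _ => by
      simp [pairs] at h h'; subst h; subst h'; rfl
  | (f, .hom A u v), q, q', h, h', hd => by
      simp only [pairs, List.mem_cons] at h h'
      rcases h with h | h <;> rcases h' with h' | h'
      · subst h; subst h'; rfl
      · exfalso
        have h2 : q'.2.dimN ≤ A.dimN := pairs_dim_le (v, A) q' h'
        subst h
        have h3 : ((f, Ty.hom A u v) : ℕ × Ty).2.dimN = A.dimN + 1 := rfl
        omega
      · exfalso
        have h2 : q.2.dimN ≤ A.dimN := pairs_dim_le (v, A) q h
        subst h'
        have h3 : ((f, Ty.hom A u v) : ℕ × Ty).2.dimN = A.dimN + 1 := rfl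
        omega
      · exact pairs_unique (v, A) q q' h h' hd

theorem pairs_tgt : ∀ (p : ℕ × Ty) (g u v : ℕ) (A : Ty),
    (g, .hom A u v) ∈ pairs p → (v, A) ∈ pairs p
  | (x, .obj), g, u, v, A, h => by simp [pairs] at h
  | (f, .hom B a b), g, u, v, A, h => by
      simp only [pairs, List.mem_cons] at h ⊢
      rcases h with h | h
      · right
        obtain ⟨h1, h2⟩ := Prod.mk.injEq .. ▸ h
        cases h2; exact pairs_self _
      · right; exact pairs_tgt (b, B) g u v A h

theorem pairs_obj : ∀ (p : ℕ × Ty), ∃ z, (z, Ty.obj) ∈ pairs p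
  | (x, .obj) => ⟨x, by simp [pairs]⟩
  | (f, .hom A u v) => by
      obtain ⟨z, hz⟩ := pairs_obj (v, A)
      exact ⟨z, by simp [pairs, hz]⟩

/-- Every derivation derives a pair in the target chain of the head of the context. -/
theorem derivation_head : ∀ {Γ : Ctx} {z : ℕ} {C : Ty}, PsVar Γ z C →
    ∃ h t, Γ = h :: t ∧ (z, C) ∈ pairs h := by
  intro Γ z C D
  induction D with
  | pss x => exact ⟨(x, .obj), [], rfl, pairs_self _⟩
  | pse y f D hy hf hyf IH =>
      exact ⟨_, _, rfl, pairs_self _⟩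
  | psd D IH =>
      obtain ⟨h, t, rfl, hm⟩ := IH
      exact ⟨h, t, rfl, pairs_tgt _ _ _ _ _ hm⟩

/-- The dimension of any derivable pair is bounded by the dimension of the head. -/
theorem head_max {h : ℕ × Ty} {t : Ctx} {z : ℕ} {C : Ty} (D : PsVar (h :: t) z C) :
    C.dimN ≤ h.2.dimN := by
  obtain ⟨h', t', e, m⟩ := derivation_head D
  obtain rfl : h = h' := (List.cons.injEq .. ▸ e).1
  exact pairs_dim_le _ _ m

/-- Uniqueness of the variable at a given dimension. -/
theorem var_unique {Γ : Ctx} {x : ℕ} {A : Ty} {y : ℕ} {B : Ty}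
    (D1 : PsVar Γ x A) (D2 : PsVar Γ y B) (h : A.dimN = B.dimN) : (x, A) = (y, B) := by
  obtain ⟨h1, t1, e1, m1⟩ := derivation_head D1
  obtain ⟨h2, t2, e2, m2⟩ := derivation_head D2
  rw [e1] at e2
  obtain ⟨rfl, rfl⟩ : h1 = h2 ∧ t1 = t2 := by
    constructor <;> [exact (List.cons.injEq .. ▸ e2).1; exact (List.cons.injEq .. ▸ e2).2]
  exact pairs_unique h1 _ _ m1 m2 h

/-- Uniqueness of derivations for `Γ ⊢ps x : A`. -/
theorem psvar_unique : ∀ {Γ : Ctx} {z : ℕ} {C : Ty} (D1 D2 : PsVar Γ z C), D1 = D2 := by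
  intro Γ z C D1
  induction D1 with
  | pss x =>
      intro D2
      cases D2 with
      | pss => rfl
      | psd D =>
          exfalso
          have := head_max D
          simp [Ty.dimN] at this
  | pse y f D hy hf hyf IH =>
      intro D2
      cases D2 with
      | pse y2 f2 D' hy' hf' hyf' =>
          have := IH D'
          subst this
          rfl
      | psd D' =>
          exfalso
          have := head_max D'
          simp [Ty.dimN] at this
  | psd D IH =>
      intro D2
      cases D2 with
      | pss x =>
          exfalso
          have := head_max D
          simp [Ty.dimN] at this
      | pse y2 f2 D' hy' hf' hyf' =>
          exfalso
          have := head_max D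
          simp [Ty.dimN] at this
      | psd D' =>
          have he := var_unique D D' (by simp [Ty.dimN])
          injection he with hf he2
          injection he2 with _ hx _
          subst hf
          subst hx
          rw [IH D']

/-- Boolean membership of a variable in (the domain of) a context. -/
def memB (x : ℕ) (Γ : Ctx) : Bool := Γ.any (fun p => p.1 == x)

theorem memB_iff (x : ℕ) (Γ : Ctx) : memB x Γ = true ↔ x ∈ Ctx.domvars Γ := by
  simp [memB, Ctx.domvars, List.any_eq_true]

/-- Boolean check that a context is a ps-context. -/
def checkB : Ctx → Bool
  | [(_, .obj)] => true
  | (f, .hom A x y) :: (y', A') :: (g, C) :: Γ =>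
      (y' == y) && (A' == A) && decide ((x, A) ∈ pairs (g, C)) &&
        checkB ((g, C) :: Γ) && !(memB y ((g, C) :: Γ)) && !(memB f ((g, C) :: Γ)) && (y != f)
  | _ => false

theorem pairs_derive {Γ : Ctx} {g : ℕ} {C : Ty} (D : PsVar Γ g C) :
    ∀ {z : ℕ} {B : Ty}, (z, B) ∈ pairs (g, C) → Nonempty (PsVar Γ z B) := by
  induction C generalizing g with
  | obj =>
      intro z B h
      simp [pairs] at h
      obtain ⟨rfl, rfl⟩ := h
      exact ⟨D⟩
  | hom A u v IH =>
      intro z B h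
      simp only [pairs, List.mem_cons] at h
      rcases h with h | h
      · obtain ⟨h1, h2⟩ := Prod.mk.injEq .. ▸ h
        subst h1; subst h2; exact ⟨D⟩
      · exact IH (D.psd) h

theorem sound : ∀ (Γ : Ctx), checkB Γ = true →
    ∃ h t, Γ = h :: t ∧ Nonempty (PsVar Γ h.1 h.2)
  | [(x, .obj)], _ => ⟨(x, .obj), [], rfl, ⟨.pss x⟩⟩
  | (f, .hom A x y) :: (y', A') :: (g, C) :: Γ, hc => by
      simp only [checkB, Bool.and_eq_true, beq_iff_eq, decide_eq_true_eq,
        Bool.not_eq_true', bne_iff_ne, ne_eq] at hc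
      obtain ⟨⟨⟨⟨⟨⟨rfl, rfl⟩, hmem⟩, hck⟩, hy⟩, hf⟩, hyf⟩ := hc
      obtain ⟨h, t, e, ⟨D⟩⟩ := sound ((g, C) :: Γ) hck
      obtain rfl : (g, C) = h := (List.cons.injEq .. ▸ e).1
      obtain ⟨Dx⟩ := pairs_derive D hmem
      refine ⟨_, _, rfl, ⟨.pse _ _ Dx ?_ ?_ hyf⟩⟩
      · rw [← memB_iff]; simp [hy]
      · rw [← memB_iff]; simp [hf]

theorem complete : ∀ {Γ : Ctx} {z : ℕ} {C : Ty}, PsVar Γ z C → checkB Γ = true := by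
  intro Γ z C D
  induction D with
  | pss x => rfl
  | pse y f D hy hf hyf IH =>
      obtain ⟨h, t, e, m⟩ := derivation_head D
      obtain ⟨g, C'⟩ := h
      subst e
      have h1 : memB y ((g, C') :: t) = false := by
        rw [Bool.eq_false_iff]; intro hc; exact hy ((memB_iff ..).mp (by simpa using hc))
      have h2 : memB f ((g, C') :: t) = false := by
        rw [Bool.eq_false_iff]; intro hc; exact hf ((memB_iff ..).mp (by simpa using hc))
      simp [checkB, m, IH, hyf, h1, h2]
  | psd D IH => exact IH

theorem psctx_iff (Γ : Ctx) : Nonempty (PsCtx Γ) ↔ checkB Γ = true := by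
  constructor
  · rintro ⟨⟨D⟩⟩; exact complete D
  · intro hc
    obtain ⟨h, t, e, ⟨D⟩⟩ := sound Γ hc
    obtain ⟨z, hz⟩ := pairs_obj h
    obtain ⟨D'⟩ := pairs_derive D hz
    exact ⟨⟨D'⟩⟩

end PsTT

open PsTT in
/-- Derivability of `Γ ⊢ps` is decidable; when derivable, the derivation is unique
(and likewise for `Γ ⊢ps x : A`); and in any two derivations `Γ ⊢ps x : A`, `Γ ⊢ps y : B`
with `dim A = dim B`, necessarily `x = y`. -/
theorem ps_judgment_decidable_and_unique :
    Nonempty (∀ Γ : Ctx, Decidable (Nonempty (PsCtx Γ))) ∧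
    (∀ Γ : Ctx, Subsingleton (PsCtx Γ)) ∧
    (∀ (Γ : Ctx) (x : ℕ) (A : Ty), Subsingleton (PsVar Γ x A)) ∧
    (∀ (Γ : Ctx) (x : ℕ) (A : Ty) (y : ℕ) (B : Ty),
      Nonempty (PsVar Γ x A) → Nonempty (PsVar Γ y B) → A.dimN = B.dimN → x = y) := by
  refine ⟨⟨fun Γ => decidable_of_iff _ (psctx_iff Γ).symm⟩, ?_, ?_, ?_⟩
  · intro Γ
    constructor
    rintro ⟨D1⟩ ⟨D2⟩
    obtain ⟨rfl, -⟩ := Prod.mk.injEq .. ▸ var_unique D1 D2 rfl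
    rw [psvar_unique D1 D2]
  · intro Γ x A
    exact ⟨fun D1 D2 => psvar_unique D1 D2⟩
  · rintro Γ x A y B ⟨D1⟩ ⟨D2⟩ h
    exact (Prod.mk.injEq .. ▸ var_unique D1 D2 h).1
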